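/- Let κ₁, κ₂ > 0 be real, let x₀ ∈ ℝ, and let θ_d, θ_n, h_d, h_n ∈ ℝ. Let N₁, N₂, W₁, W₂, W_d, W_n : ℝ → ℝ be differentiable at x₀ with W₁(x₀) = W₂(x₀) = 0, W₁'(x₀) = W₂'(x₀) = 0, W_d(x₀) = 1, W_d'(x₀) = 0, W_n(x₀) = 0, and W_n'(x₀) = 1. Define u_L := W₁·N₁ + θ_d·W_d + (θ_n/κ₁)·W_n and u_R := W₂·N₂ + (θ_d + h_d)·W_d + ((θ_n + h_n)/κ₂)·W_n. Then u_R(x₀) − u_L(x₀) = h_d and κ₂·u_R'(x₀) − κ₁·u_L'(x₀) = h_n. -/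

import Mathlib

/-! The window functions are chosen so that, at the interface, the term `W · N` vanishes to first
order while `W_d` and `W_n` pick out the value and the slope. Hence each one-sided ansatz has
value `θ_d` (resp. `θ_d + h_d`) and derivative `θ_n / κ₁` (resp. `(θ_n + h_n) / κ₂`) at `x₀`,
and multiplying the derivatives by the conductivities cancels the `κ`'s. -/

section WindowAnsatz

variable {𝕜 : Type*} [NontriviallyNormedField 𝕜]

/-- `a` is the interface value `θ_d` and `b` the interface flux divided by the conductivity. -/
def windowAnsatz (W N Wd Wn : 𝕜 → 𝕜) (a b : 𝕜) (x : 𝕜) : 𝕜 :=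
  W x * N x + a * Wd x + b * Wn x

variable {W N Wd Wn : 𝕜 → 𝕜} {x₀ : 𝕜}

theorem hasDerivAt_mul_of_vanishing_window (hW : HasDerivAt W 0 x₀) (hW0 : W x₀ = 0)
    (hN : DifferentiableAt 𝕜 N x₀) : HasDerivAt (fun x => W x * N x) 0 x₀ :=
  (hW.mul hN.hasDerivAt).congr_deriv (by simp [hW0])

theorem windowAnsatz_apply_interface (a b : 𝕜) (hW0 : W x₀ = 0) (hWd0 : Wd x₀ = 1)
    (hWn0 : Wn x₀ = 0) : windowAnsatz W N Wd Wn a b x₀ = a := by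
  simp [windowAnsatz, hW0, hWd0, hWn0]

theorem hasDerivAt_windowAnsatz (a b : 𝕜) (hW : HasDerivAt W 0 x₀) (hW0 : W x₀ = 0)
    (hN : DifferentiableAt 𝕜 N x₀) (hWd : HasDerivAt Wd 0 x₀) (hWn : HasDerivAt Wn 1 x₀) :
    HasDerivAt (windowAnsatz W N Wd Wn a b) b x₀ :=
  (((hasDerivAt_mul_of_vanishing_window hW hW0 hN).add (hWd.const_mul a)).add
    (hWn.const_mul b)).congr_deriv (by simp)

end WindowAnsatz

/-- Windowing ansatz with discontinuous interface functions: the ansatz enforces a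
prescribed jump `h_d` in the solution and `h_n` in the flux `κ·u'` across the
interface, for every choice of `N₁, N₂, θ_d, θ_n`. -/
theorem stmt8 (κ₁ κ₂ : ℝ) (hκ₁ : 0 < κ₁) (hκ₂ : 0 < κ₂) (x₀ θd θn hd hn : ℝ)
    (N₁ N₂ W₁ W₂ Wd Wn : ℝ → ℝ)
    (hN₁ : DifferentiableAt ℝ N₁ x₀) (hN₂ : DifferentiableAt ℝ N₂ x₀)
    (hW₁ : DifferentiableAt ℝ W₁ x₀) (hW₂ : DifferentiableAt ℝ W₂ x₀)
    (hWd : DifferentiableAt ℝ Wd x₀) (hWn : DifferentiableAt ℝ Wn x₀)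
    (hW₁0 : W₁ x₀ = 0) (hW₂0 : W₂ x₀ = 0)
    (hW₁' : deriv W₁ x₀ = 0) (hW₂' : deriv W₂ x₀ = 0)
    (hWd0 : Wd x₀ = 1) (hWd' : deriv Wd x₀ = 0)
    (hWn0 : Wn x₀ = 0) (hWn' : deriv Wn x₀ = 1)
    (uL uR : ℝ → ℝ)
    (huL : uL = fun x => W₁ x * N₁ x + θd * Wd x + (θn / κ₁) * Wn x)
    (huR : uR = fun x => W₂ x * N₂ x + (θd + hd) * Wd x + ((θn + hn) / κ₂) * Wn x) :
    uR x₀ - uL x₀ = hd ∧ κ₂ * deriv uR x₀ - κ₁ * deriv uL x₀ = hn := by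
  have huL' : uL = windowAnsatz W₁ N₁ Wd Wn θd (θn / κ₁) := huL
  have huR' : uR = windowAnsatz W₂ N₂ Wd Wn (θd + hd) ((θn + hn) / κ₂) := huR
  have hWd₀ : HasDerivAt Wd 0 x₀ := hWd' ▸ hWd.hasDerivAt
  have hWn₁ : HasDerivAt Wn 1 x₀ := hWn' ▸ hWn.hasDerivAt
  have hderivL : deriv uL x₀ = θn / κ₁ := huL' ▸
    (hasDerivAt_windowAnsatz _ _ (hW₁' ▸ hW₁.hasDerivAt) hW₁0 hN₁ hWd₀ hWn₁).deriv
  have hderivR : deriv uR x₀ = (θn + hn) / κ₂ := huR' ▸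
    (hasDerivAt_windowAnsatz _ _ (hW₂' ▸ hW₂.hasDerivAt) hW₂0 hN₂ hWd₀ hWn₁).deriv
  constructor
  · rw [huL', huR', windowAnsatz_apply_interface _ _ hW₁0 hWd0 hWn0,
      windowAnsatz_apply_interface _ _ hW₂0 hWd0 hWn0]
    ring
  · rw [hderivL, hderivR, mul_div_cancel₀ _ hκ₂.ne', mul_div_cancel₀ _ hκ₁.ne']
    ring
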